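/- arXiv:1902.07871 — 2 statements merged into one kernel-verified Lean document; each statement's English description precedes it below -/
import Mathlib

section
/- Every finite convex combination of ML absolutely continuous probability measures is ML absolutely continuous. Moreover, an ML absolutely continuous measure μ is an extreme point of the set of ML absolutely continuous measures (i.e., μ cannot be written as α·μ₁ + (1−α)·μ₂ with 0 < α < 1 and μ₁ ≠ μ₂ both ML absolutely continuous) if and only if μ = δ_Z for some Martin-Löf random Z ∈ 2^ℕ, where δ_Z is the Dirac measure concentrated on {Z}. -/
open MeasureTheory Filter

/-- Cantor space: the space of infinite binary sequences. -/
abbrev Cantor : Type := ℕ → Bool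

/-- Finite binary strings. -/
abbrev BStr : Type := List Bool

/-- The cylinder set of sequences extending the string `x`. -/
def cyl (x : BStr) : Set Cantor := {Z | ∀ i : Fin x.length, Z i.1 = x.get i}

/-- The string of the first `n` bits of `Z`. -/
def seg (Z : Cantor) (n : ℕ) : BStr := List.ofFn fun i : Fin n => Z i.1

/-- `lam` is the uniform (fair-coin product) measure: every cylinder `[x]`
has measure `2^{-|x|}`. -/
def IsUniform (lam : Measure Cantor) : Prop :=
  ∀ x : BStr, lam (cyl x) = (2 : ENNReal)⁻¹ ^ x.length

/-- `(G_m)` is a Martin-Löf test with respect to the measure `ρ`: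
the sets `G_m` are uniformly effectively open and `ρ (G_m) ≤ 2^{-m}`. -/
def IsMLTest (ρ : Measure Cantor) (G : ℕ → Set Cantor) : Prop :=
  (∃ σ : ℕ → ℕ → BStr, Computable₂ σ ∧ ∀ m, G m = ⋃ i, cyl (σ m i)) ∧
  ∀ m, ρ (G m) ≤ (2 : ENNReal)⁻¹ ^ m

/-- `μ` is Martin-Löf absolutely continuous in `ρ`: `inf_m μ(G_m) = 0`
for every `ρ`-Martin-Löf test `(G_m)`. -/
def MLAC (μ ρ : Measure Cantor) : Prop :=
  ∀ G : ℕ → Set Cantor, IsMLTest ρ G → ⨅ m, μ (G m) = 0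

/-- `Z` is Martin-Löf random with respect to `lam`. -/
def MLRandom (lam : Measure Cantor) (Z : Cantor) : Prop :=
  ∀ G : ℕ → Set Cantor, IsMLTest lam G → Z ∉ ⋂ m, G m

/-- `ρ` is a computable measure: `ρ [x]` is a computable real, uniformly in `x`. -/
def ComputableMeasure (ρ : Measure Cantor) : Prop :=
  ∃ q : BStr → ℕ → ℚ, Computable₂ q ∧
    ∀ x k, |(q x k : ℝ) - (ρ (cyl x)).toReal| ≤ (2 : ℝ)⁻¹ ^ k

/-- `U` is a universal plain machine. -/
def UniversalPlain (U : BStr →. BStr) : Prop :=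
  Partrec U ∧ ∀ M : BStr →. BStr, Partrec M →
    ∃ c : ℕ, ∀ p x, x ∈ M p → ∃ q : BStr, q.length ≤ p.length + c ∧ x ∈ U q

/-- The domain of `M` is an antichain under the prefix relation. -/
def PrefixFreeDom (M : BStr →. BStr) : Prop :=
  ∀ p q : BStr, (M p).Dom → (M q).Dom → p <+: q → p = q

/-- `U` is a universal prefix-free machine. -/
def UniversalPrefixFree (U : BStr →. BStr) : Prop :=
  Partrec U ∧ PrefixFreeDom U ∧
  ∀ M : BStr →. BStr, Partrec M → PrefixFreeDom M →
    ∃ c : ℕ, ∀ p x, x ∈ M p → ∃ q : BStr, q.length ≤ p.length + c ∧ x ∈ U q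

/-- Kolmogorov complexity of the string `x` with respect to the machine `U`:
the minimal length of a `U`-description of `x`. -/
noncomputable def cpx (U : BStr →. BStr) (x : BStr) : ℕ :=
  sInf {n | ∃ q : BStr, q.length = n ∧ x ∈ U q}

/-- A natural number `n` identified with the string `0^n`. -/
def numStr (n : ℕ) : BStr := List.replicate n false

/-- Complexity of the natural number `n` (i.e., of the string `0^n`). -/
noncomputable def cpxN (U : BStr →. BStr) (n : ℕ) : ℕ := cpx U (numStr n)

/-- The `μ`-average complexity of the strings of length `n`:
`Σ_{|x|=n} cpx(x) · μ[x]`. -/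
noncomputable def avgCpx (U : BStr →. BStr) (μ : Measure Cantor) (n : ℕ) : ℝ :=
  ∑ v : Fin n → Bool, (cpx U (List.ofFn v) : ℝ) * (μ (cyl (List.ofFn v))).toReal

/-- A measure `μ` is trivial for the complexity given by the machine `U`
(e.g. K-trivial when `U` is the universal prefix-free machine, C-trivial
when `U` is the universal plain machine). -/
def MeasTrivial (U : BStr →. BStr) (μ : Measure Cantor) : Prop :=
  ∃ c : ℝ, ∀ n : ℕ, avgCpx U μ n ≤ (cpxN U n : ℝ) + c

/-! A finite measure `μ` is ML absolutely continuous iff `μ (⋂ m, G m) = 0` for every ML test `G`: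
for the converse, replace `G` by the nested test of its tails `⋃ k > m, G k` and use continuity
from above. In this form the property passes to finite weighted sums and to measures `ν ≪ μ`, and
`δ_Z` has it iff `Z` is ML random. An MLAC probability measure with `0 < μ s < 1` for some
measurable `s` is the proper mixture `μ s • μ[|s] + (1 - μ s) • μ[|sᶜ]` of two distinct MLAC
measures; otherwise it is a zero-one measure on the standard Borel space `2^ℕ`, hence a Dirac
measure. Conversely, a Dirac measure is not a proper mixture of two distinct probability
measures at all. -/

open ProbabilityTheory

section Mixture

variable {α : Type*} [MeasurableSpace α]

theorem eq_dirac_of_smul_le_dirac [MeasurableSingletonClass α] {ν : Measure α}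
    [IsProbabilityMeasure ν] {x : α} {c : ENNReal} (hc : c ≠ 0)
    (h : c • ν ≤ Measure.dirac x) : ν = Measure.dirac x := by
  have hcompl : ν {x}ᶜ = 0 := by simpa [hc] using h {x}ᶜ
  have hx : ν {x} = 1 := (prob_compl_eq_zero_iff (measurableSet_singleton x)).1 hcompl
  calc ν = ν.restrict {x} := (Measure.restrict_eq_self_of_ae_mem (mem_ae_iff.2 hcompl)).symm
    _ = Measure.dirac x := by rw [Measure.restrict_singleton, hx, one_smul]

theorem MeasureTheory.Measure.eq_smul_cond_add_smul_cond_compl (μ : Measure α)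
    [IsProbabilityMeasure μ] {s : Set α} (hs : MeasurableSet s) :
    μ = μ s • μ[|s] + (1 - μ s) • μ[|sᶜ] := by
  ext t
  rw [Measure.add_apply, Measure.smul_apply, Measure.smul_apply, smul_eq_mul, smul_eq_mul,
    ← prob_compl_eq_one_sub hs, mul_comm, mul_comm (μ sᶜ), cond_add_cond_compl_eq hs]

end Mixture

theorem measurableSet_cyl (x : BStr) : MeasurableSet (cyl x) := by
  have : cyl x = ⋂ i : Fin x.length, (fun Z : Cantor => Z i) ⁻¹' {x.get i} := by
    ext Z; simp [cyl]
  rw [this]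
  exact .iInter fun i => measurable_pi_apply _ (.singleton _)

namespace IsMLTest

variable {ρ : Measure Cantor} {G : ℕ → Set Cantor}

theorem measurableSet (hG : IsMLTest ρ G) (m : ℕ) : MeasurableSet (G m) := by
  obtain ⟨⟨σ, -, hσ⟩, -⟩ := hG
  rw [hσ m]
  exact .iUnion fun i => measurableSet_cyl _

theorem tail (hG : IsMLTest ρ G) : IsMLTest ρ fun m => ⋃ k, G (m + 1 + k) := by
  obtain ⟨⟨σ, hσc, hσ⟩, hbound⟩ := hG
  refine ⟨⟨fun m i => σ (m + 1 + i.unpair.1) i.unpair.2, ?_, fun m => ?_⟩, fun m => ?_⟩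
  · have hfst : Primrec fun p : ℕ × ℕ => p.1 + 1 + p.2.unpair.1 :=
      Primrec.nat_add.comp (Primrec.succ.comp .fst)
        (Primrec.fst.comp (Primrec.unpair.comp .snd))
    have hsnd : Primrec fun p : ℕ × ℕ => p.2.unpair.2 :=
      Primrec.snd.comp (Primrec.unpair.comp .snd)
    exact hσc.comp hfst.to_comp hsnd.to_comp
  · ext Z
    simp only [hσ, Set.mem_iUnion]
    exact ⟨fun ⟨k, i, hi⟩ => ⟨Nat.pair k i, by simpa using hi⟩, fun ⟨i, hi⟩ => ⟨_, _, hi⟩⟩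
  · calc ρ (⋃ k, G (m + 1 + k)) ≤ ∑' k, ρ (G (m + 1 + k)) := measure_iUnion_le _
      _ ≤ ∑' k, (2 : ENNReal)⁻¹ ^ (m + 1 + k) := ENNReal.tsum_le_tsum fun k => hbound _
      _ = 2⁻¹ ^ m * ∑' k, (2 : ENNReal)⁻¹ ^ (k + 1) := by
          rw [← ENNReal.tsum_mul_left]
          exact tsum_congr fun k => by ring
      _ = 2⁻¹ ^ m := by
          rw [ENNReal.tsum_geometric_add_one, ENNReal.one_sub_inv_two,
            ENNReal.mul_inv_cancel (by simp) (by simp), mul_one]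

end IsMLTest

section MLAC

variable {ρ μ : Measure Cantor}

theorem mlac_iff_measure_iInter_eq_zero [IsFiniteMeasure μ] :
    MLAC μ ρ ↔ ∀ G, IsMLTest ρ G → μ (⋂ m, G m) = 0 := by
  refine ⟨fun hμ G hG => le_antisymm ?_ bot_le, fun hμ G hG => le_antisymm ?_ bot_le⟩
  · exact hμ G hG ▸ le_iInf fun m => measure_mono (Set.iInter_subset _ m)
  · set H := fun m => ⋃ k, G (m + 1 + k)
    have hanti : Antitone H := fun m n hmn => Set.iUnion_subset fun k =>
      (Set.subset_iUnion _ (n - m + k)).trans_eq' (by congr 1; omega)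
    have hGH : ∀ m, G (m + 1) ⊆ H m := fun m => Set.subset_iUnion_of_subset 0 le_rfl
    calc ⨅ m, μ (G m) ≤ ⨅ m, μ (H m) :=
          le_iInf fun m => (iInf_le _ (m + 1)).trans (measure_mono (hGH m))
      _ = μ (⋂ m, H m) :=
          (hanti.measure_iInter (fun m => (hG.tail.measurableSet m).nullMeasurableSet)
            ⟨0, measure_ne_top μ _⟩).symm
      _ = 0 := hμ H hG.tail

theorem MLAC.of_absolutelyContinuous {ν : Measure Cantor} [IsFiniteMeasure μ] [IsFiniteMeasure ν]
    (hμ : MLAC μ ρ) (hνμ : ν ≪ μ) : MLAC ν ρ :=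
  mlac_iff_measure_iInter_eq_zero.2 fun G hG => hνμ (mlac_iff_measure_iInter_eq_zero.1 hμ G hG)

theorem MLAC.sum_smul {ι : Type*} [Fintype ι] {μs : ι → Measure Cantor}
    [∀ i, IsFiniteMeasure (μs i)] {w : ι → ENNReal} (hw : ∀ i, w i ≠ ⊤)
    (hμs : ∀ i, MLAC (μs i) ρ) : MLAC (∑ i, w i • μs i) ρ := by
  have := fun i => (μs i).smul_finite (hw i)
  refine mlac_iff_measure_iInter_eq_zero.2 fun G hG => ?_
  simp [mlac_iff_measure_iInter_eq_zero.1 (hμs _) G hG]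

theorem mlac_dirac_iff {Z : Cantor} : MLAC (Measure.dirac Z) ρ ↔ MLRandom ρ Z := by
  simp only [mlac_iff_measure_iInter_eq_zero, MLRandom]
  exact forall₂_congr fun G hG =>
    dirac_eq_zero_iff_not_mem (.iInter hG.measurableSet)

theorem MLAC.exists_split [IsProbabilityMeasure μ] (hμ : MLAC μ ρ) {s : Set Cantor}
    (hs : MeasurableSet s) (h0 : μ s ≠ 0) (h1 : μ s ≠ 1) :
    ∃ (α : ENNReal) (μ₁ μ₂ : Measure Cantor), 0 < α ∧ α < 1 ∧ μ₁ ≠ μ₂ ∧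
      IsProbabilityMeasure μ₁ ∧ IsProbabilityMeasure μ₂ ∧
      MLAC μ₁ ρ ∧ MLAC μ₂ ρ ∧ μ = α • μ₁ + (1 - α) • μ₂ := by
  have hc0 : μ sᶜ ≠ 0 := by
    rw [prob_compl_eq_one_sub hs]
    exact (tsub_pos_of_lt (prob_le_one.lt_of_ne h1)).ne'
  have := cond_isProbabilityMeasure h0
  have := cond_isProbabilityMeasure hc0
  refine ⟨μ s, μ[|s], μ[|sᶜ], pos_iff_ne_zero.2 h0, prob_le_one.lt_of_ne h1, fun heq => ?_,
    inferInstance, inferInstance, hμ.of_absolutelyContinuous cond_absolutelyContinuous,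
    hμ.of_absolutelyContinuous cond_absolutelyContinuous, μ.eq_smul_cond_add_smul_cond_compl hs⟩
  have := congrArg (· s) heq
  simp [cond_apply_self h0 (measure_ne_top μ s), cond_apply hs.compl] at this

end MLAC

theorem MLAC_convex_and_extreme_points_general
    (lam : Measure Cantor) :
    (∀ (k : ℕ) (μs : Fin k → Measure Cantor) (w : Fin k → ENNReal),
      (∀ i, IsProbabilityMeasure (μs i)) → (∀ i, MLAC (μs i) lam) →
      (∑ i, w i) = 1 → MLAC (∑ i, w i • μs i) lam) ∧
    (∀ μ : Measure Cantor, IsProbabilityMeasure μ → MLAC μ lam →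
      ((¬ ∃ (α : ENNReal) (μ₁ μ₂ : Measure Cantor), 0 < α ∧ α < 1 ∧ μ₁ ≠ μ₂ ∧
          IsProbabilityMeasure μ₁ ∧ IsProbabilityMeasure μ₂ ∧
          MLAC μ₁ lam ∧ MLAC μ₂ lam ∧ μ = α • μ₁ + (1 - α) • μ₂) ↔
        (∃ Z : Cantor, MLRandom lam Z ∧ μ = Measure.dirac Z))) := by
  refine ⟨fun k μs w _ hμs hw => MLAC.sum_smul (fun i => ?_) hμs,
    fun μ _ hμ => ⟨fun hext => ?_, ?_⟩⟩
  · exact ENNReal.sum_ne_top.1 (hw ▸ ENNReal.one_ne_top) i (Finset.mem_univ i)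
  · have : IsZeroOneMeasure μ := ⟨fun s hs => by
      by_contra! h
      exact hext (hμ.exists_split hs h.1 h.2)⟩
    obtain ⟨Z, rfl⟩ := IsZeroOneMeasure.exists_eq_dirac (μ := μ)
    exact ⟨Z, mlac_dirac_iff.1 hμ, rfl⟩
  · rintro ⟨Z, -, rfl⟩ ⟨α, μ₁, μ₂, hα0, hα1, hne, _, _, -, -, heq⟩
    have h₁ : α • μ₁ ≤ Measure.dirac Z := heq ▸ Measure.le_add_right le_rfl
    have h₂ : (1 - α) • μ₂ ≤ Measure.dirac Z := heq ▸ Measure.le_add_left le_rfl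
    exact hne ((eq_dirac_of_smul_le_dirac hα0.ne' h₁).trans
      (eq_dirac_of_smul_le_dirac (tsub_pos_of_lt hα1).ne' h₂).symm)

/-- the ML absolutely continuous probability measures are closed
under finite convex combinations, and an ML absolutely continuous measure is
an extreme point of the set of ML absolutely continuous measures iff it is a
Dirac measure `δ_Z` for a Martin-Löf random `Z`. -/
theorem MLAC_convex_and_extreme_points
    (lam : Measure Cantor) (hlam : IsUniform lam) :
    (∀ (k : ℕ) (μs : Fin k → Measure Cantor) (w : Fin k → ENNReal),
      (∀ i, IsProbabilityMeasure (μs i)) → (∀ i, MLAC (μs i) lam) →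
      (∑ i, w i) = 1 → MLAC (∑ i, w i • μs i) lam) ∧
    (∀ μ : Measure Cantor, IsProbabilityMeasure μ → MLAC μ lam →
      ((¬ ∃ (α : ENNReal) (μ₁ μ₂ : Measure Cantor), 0 < α ∧ α < 1 ∧ μ₁ ≠ μ₂ ∧
          IsProbabilityMeasure μ₁ ∧ IsProbabilityMeasure μ₂ ∧
          MLAC μ₁ lam ∧ MLAC μ₂ lam ∧ μ = α • μ₁ + (1 - α) • μ₂) ↔
        (∃ Z : Cantor, MLRandom lam Z ∧ μ = Measure.dirac Z))) :=
  MLAC_convex_and_extreme_points_general lam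
end

section
/- There is a constant c such that for every Borel probability measure μ on 2^ℕ and every n: n − C(μ↾n) ≤ 2·(n + K(n) − K(μ↾n)) + c. -/
open MeasureTheory Filter

/-!
Let `n = |x|`. A prefix-free description of `x` is a shortest prefix-free program `q` for `n`,
followed by a shortest plain program `p` for `x` that is made self-delimiting relative to
`n` by prepending `(n + a - |p|) / 2` in unary and the parity of `n + a - |p|`, where `a`
bounds `C(x) - |x|`. The code costs about `(n + C(x)) / 2` bits after `q`, so
`2 K(x) ≤ |x| + C(x) + 2 K(|x|) + O(1)`; averaging this over the strings of length `n`
with weights `μ[x]` gives the theorem.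
-/

open Nat.Partrec (Code)
open Nat.Partrec.Code Encodable

theorem cpx_le_length {U : BStr →. BStr} {x q : BStr} (h : x ∈ U q) : cpx U x ≤ q.length :=
  Nat.sInf_le ⟨q, rfl, h⟩

theorem exists_length_eq_cpx {U : BStr →. BStr} {x q : BStr} (h : x ∈ U q) :
    ∃ p : BStr, p.length = cpx U x ∧ x ∈ U p :=
  Nat.sInf_mem (s := {n | ∃ p : BStr, p.length = n ∧ x ∈ U p}) ⟨q.length, q, rfl, h⟩

theorem cpx_le_length_add {U M : BStr →. BStr} {c : ℕ}
    (hM : ∀ p x, x ∈ M p → ∃ q : BStr, q.length ≤ p.length + c ∧ x ∈ U q)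
    {p x : BStr} (hx : x ∈ M p) : cpx U x ≤ p.length + c :=
  let ⟨_, hq, hxq⟩ := hM p x hx
  (cpx_le_length hxq).trans hq

theorem primrec_replicate (b : Bool) : Primrec fun n : ℕ => List.replicate n b :=
  (Primrec.list_map Primrec.list_range (Primrec.const b).to₂).of_eq fun n => by
    simp [List.map_const']

section UnaryCode

def unaryDecode : BStr → Option (ℕ × BStr)
  | [] => none
  | false :: r => some (0, r)
  | true :: y => (unaryDecode y).map fun er => (er.1 + 1, er.2)

theorem unaryDecode_eq_some_iff {y r : BStr} {e : ℕ} :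
    unaryDecode y = some (e, r) ↔ y = List.replicate e true ++ false :: r := by
  induction y generalizing e with
  | nil => simp [unaryDecode]
  | cons b y ih => cases b <;> cases e <;> simp [unaryDecode, ih, List.replicate_succ]

open Primrec in
theorem primrec_unaryDecode : Primrec unaryDecode := by
  refine (list_rec (f := id) (g := fun _ => none)
    (h := fun _ (p : Bool × BStr × Option (ℕ × BStr)) =>
      cond p.1 (p.2.2.map fun er => (er.1 + 1, er.2)) (some (0, p.2.1))) Primrec.id (const none)
    (Primrec.cond (fst.comp snd)
      (option_map (snd.comp (snd.comp snd))
        ((pair (succ.comp (fst.comp snd)) (snd.comp snd)).to₂))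
      (option_some.comp (pair (const 0) (fst.comp (snd.comp snd))))).to₂).of_eq fun y => ?_
  induction y with
  | nil => rfl
  | cons b y ih => cases b <;> simp [unaryDecode, ← ih]

theorem eq_and_prefix_of_unary_prefix {e e' : ℕ} {r r' : BStr}
    (h : List.replicate e true ++ false :: r <+: List.replicate e' true ++ false :: r') :
    e = e' ∧ r <+: r' := by
  induction e generalizing e' with
  | zero => cases e' <;> simp_all [List.replicate_succ, List.cons_prefix_cons]
  | succ e ih =>
    cases e' with
    | zero => simp [List.replicate_succ, List.cons_prefix_cons] at h
    | succ e' =>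
      simp only [List.replicate_succ, List.cons_append, List.cons_prefix_cons, true_and] at h
      simpa using ih h

def unaryMachine (y : BStr) : Part BStr :=
  Part.ofOption <| (unaryDecode y).bind fun er => if er.2 = [] then some (numStr er.1) else none

open Primrec in
theorem partrec_unaryMachine : Partrec unaryMachine :=
  Computable.ofOption (option_bind primrec_unaryDecode
    (ite (Primrec.eq.comp (snd.comp snd) (const []))
      (option_some.comp ((primrec_replicate false).comp (fst.comp snd)))
      (const none)).to₂).to_comp

theorem numStr_mem_unaryMachine (n : ℕ) :
    numStr n ∈ unaryMachine (List.replicate n true ++ [false]) := by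
  have h : unaryDecode (List.replicate n true ++ [false]) = some (n, []) :=
    unaryDecode_eq_some_iff.2 rfl
  simp [unaryMachine, h]

theorem prefixFreeDom_unaryMachine : PrefixFreeDom unaryMachine := by
  have dom : ∀ {y}, (unaryMachine y).Dom → ∃ e, y = List.replicate e true ++ [false] := by
    intro y hy
    obtain ⟨x, hx⟩ := Part.dom_iff_mem.1 hy
    simp only [unaryMachine, Part.mem_ofOption, Option.mem_def, Option.bind_eq_some_iff,
      Option.ite_none_right_eq_some, Prod.exists] at hx
    obtain ⟨e, r, he, rfl, -⟩ := hx
    exact ⟨e, unaryDecode_eq_some_iff.1 he⟩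
  intro y y' hy hy' hpre
  obtain ⟨e, rfl⟩ := dom hy
  obtain ⟨e', rfl⟩ := dom hy'
  rw [(eq_and_prefix_of_unary_prefix hpre).1]

-- Without such a program, `cpxN UK n` would be the junk value `sInf ∅ = 0`.
theorem UniversalPrefixFree.exists_numStr_mem {UK : BStr →. BStr}
    (hUK : UniversalPrefixFree UK) (n : ℕ) : ∃ q, numStr n ∈ UK q := by
  obtain ⟨c, hc⟩ := hUK.2.2 _ partrec_unaryMachine prefixFreeDom_unaryMachine
  obtain ⟨q, -, hq⟩ := hc _ _ (numStr_mem_unaryMachine n)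
  exact ⟨q, hq⟩

end UnaryCode

section PadCode

/-- Reads `y = 1^e 0 b p` with `|p| + 2e + b = m`: given `m`, this is a self-delimiting code
for `p` of length `(m + |p|) / 2 + O(1)`. -/
def padDecode (m : ℕ) (y : BStr) : Option BStr :=
  (unaryDecode y).bind fun er => match er.2 with
    | b :: p => if p.length + 2 * er.1 + b.toNat = m then some p else none
    | [] => none

theorem padDecode_eq_some_iff {m : ℕ} {y p : BStr} :
    padDecode m y = some p ↔
      ∃ e b, y = List.replicate e true ++ false :: b :: p ∧ p.length + 2 * e + b.toNat = m := by
  constructor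
  · intro h
    obtain ⟨⟨e, r⟩, he, hr⟩ := Option.bind_eq_some_iff.1 h
    rcases r with _ | ⟨b, p'⟩
    · cases hr
    · simp only [Option.ite_none_right_eq_some, Option.some.injEq] at hr
      obtain ⟨hlen, rfl⟩ := hr
      exact ⟨e, b, unaryDecode_eq_some_iff.1 he, hlen⟩
  · rintro ⟨e, b, rfl, hlen⟩
    simp [padDecode, unaryDecode_eq_some_iff.2 rfl, hlen]

open Primrec in
theorem primrec₂_padDecode : Primrec₂ padDecode := by
  refine (option_bind (primrec_unaryDecode.comp snd)
    (list_casesOn (f := fun (me : (ℕ × BStr) × ℕ × BStr) => me.2.2) (g := fun _ => none)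
      (h := fun (me : (ℕ × BStr) × ℕ × BStr) (bp : Bool × BStr) =>
        if bp.2.length + 2 * me.2.1 + bp.1.toNat = me.1.1 then some bp.2 else none)
      (snd.comp snd) (const none)
      (ite (Primrec.eq.comp
        (nat_add.comp (nat_add.comp (list_length.comp (snd.comp snd))
            (nat_mul.comp (const 2) (fst.comp (snd.comp fst))))
          (Primrec.cond (fst.comp snd) (const 1) (const 0)))
        (fst.comp (fst.comp fst)))
        (option_some.comp (snd.comp snd)) (const none)).to₂).to₂).to₂.of_eq fun m y => ?_
  simp only [padDecode]
  congr 1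
  funext er
  rcases er with ⟨e, _ | ⟨b, p⟩⟩ <;> rfl

theorem padDecode_prefix_eq {m : ℕ} {y y' p p' : BStr} (h : padDecode m y = some p)
    (h' : padDecode m y' = some p') (hy : y <+: y') : y = y' := by
  obtain ⟨e, b, rfl, hlen⟩ := padDecode_eq_some_iff.1 h
  obtain ⟨e', b', rfl, hlen'⟩ := padDecode_eq_some_iff.1 h'
  obtain ⟨rfl, hbp⟩ := eq_and_prefix_of_unary_prefix hy
  obtain ⟨rfl, hp⟩ := List.cons_prefix_cons.1 hbp
  rw [hp.eq_of_length (by omega)]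

theorem exists_padDecode_eq_some {m : ℕ} {p : BStr} (hp : p.length ≤ m) :
    ∃ y, padDecode m y = some p ∧ 2 * y.length ≤ m + p.length + 4 := by
  refine ⟨List.replicate ((m - p.length) / 2) true ++ false ::
    decide ((m - p.length) % 2 = 1) :: p, padDecode_eq_some_iff.2 ⟨_, _, rfl, ?_⟩, ?_⟩
  · rcases Nat.mod_two_eq_zero_or_one (m - p.length) with h | h <;> simp [h] <;> omega
  · simp only [List.length_append, List.length_replicate, List.length_cons]
    omega

def padMachine (U : BStr →. BStr) (m : ℕ) (y : BStr) : Part BStr :=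
  (Part.ofOption (padDecode m y)).bind U

theorem partrec₂_padMachine {U : BStr →. BStr} (hU : Partrec U) : Partrec₂ (padMachine U) :=
  (Partrec.bind (Computable.ofOption primrec₂_padDecode.to_comp)
    (hU.comp Computable.snd).to₂).to₂

theorem prefixFreeDom_padMachine (U : BStr →. BStr) (m : ℕ) :
    PrefixFreeDom (padMachine U m) := by
  have dom : ∀ {y}, (padMachine U m y).Dom → ∃ p, padDecode m y = some p := fun hy =>
    Option.isSome_iff_exists.1 ((Part.ofOption_dom _).1 hy.1)
  intro y y' hy hy' hpre
  obtain ⟨p, hp⟩ := dom hy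
  obtain ⟨p', hp'⟩ := dom hy'
  exact padDecode_prefix_eq hp hp' hpre

theorem mem_padMachine {U : BStr →. BStr} {m : ℕ} {y p x : BStr} (hy : padDecode m y = some p)
    (hx : x ∈ U p) : x ∈ padMachine U m y := by
  simp only [padMachine, hy]
  exact Part.mem_bind (Part.mem_some p) hx

end PadCode

section Sequential

def IsCodeOf {α σ : Type*} [Primcodable α] [Primcodable σ] (c : Code) (f : α →. σ) : Prop :=
  ∀ a, eval c (encode a) = (f a).map encode

theorem Partrec.exists_isCodeOf {α σ : Type*} [Primcodable α] [Primcodable σ]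
    {f : α →. σ} (hf : Partrec f) : ∃ c : Code, IsCodeOf c f := by
  obtain ⟨c, hc⟩ := exists_code.1 hf
  exact ⟨c, fun a => by simp [hc, encodek]⟩

theorem exists_evaln_bind_decode_iff {α σ : Type*} [Primcodable α] [Primcodable σ]
    {f : α →. σ} {c : Code} (hc : IsCodeOf c f) {a : α} {s : σ} :
    (∃ t, (evaln t c (encode a)).bind decode = some s) ↔ s ∈ f a := by
  constructor
  · rintro ⟨t, ht⟩
    obtain ⟨r, hr, hd⟩ := Option.bind_eq_some_iff.1 ht
    obtain ⟨s', hs', rfl⟩ := Part.mem_map_iff _ |>.1 (hc a ▸ evaln_sound hr)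
    rw [encodek, Option.some.injEq] at hd
    exact hd ▸ hs'
  · intro hs
    obtain ⟨t, ht⟩ := evaln_complete.1 (hc a ▸ Part.mem_map encode hs)
    exact ⟨t, by rw [Option.mem_def.1 ht, Option.bind_some, encodek]⟩

theorem PrefixFreeDom.eq_of_isPrefix {V : BStr →. BStr} (hV : PrefixFreeDom V) {q q' z : BStr}
    (hq : q <+: z) (hq' : q' <+: z) (hd : (V q).Dom) (hd' : (V q').Dom) : q = q' := by
  rcases List.prefix_or_prefix_of_prefix hq hq' with h | h
  · exact hV _ _ hd hd' h
  · exact (hV _ _ hd' hd h).symm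

variable {V : BStr →. BStr} {c : Code} {F : BStr → BStr →. BStr}

/-- Dovetails over `m = ⟪k, t⟫` for a prefix `z.take k` on which `c` halts within `t` steps. -/
def haltingPrefix (c : Code) (z : BStr) : Part (ℕ × BStr) :=
  Nat.rfindOpt fun m =>
    ((evaln m.unpair.2 c (encode (z.take m.unpair.1))).bind (decode (α := BStr))).map
      (m.unpair.1, ·)

def seqMachine (c : Code) (F : BStr → BStr →. BStr) (z : BStr) : Part BStr :=
  (haltingPrefix c z).bind fun ks => F ks.2 (z.drop ks.1)

open Primrec in
theorem partrec_seqMachine (hF : Partrec₂ F) : Partrec (seqMachine c F) := by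
  have hk : Primrec fun zm : BStr × ℕ => zm.2.unpair.1 := fst.comp (unpair.comp snd)
  have hstep : Computable₂ fun (z : BStr) (m : ℕ) =>
      ((evaln m.unpair.2 c (encode (z.take m.unpair.1))).bind (decode (α := BStr))).map
        (m.unpair.1, ·) :=
    (option_map (option_bind
      (primrec_evaln.comp (pair (pair (snd.comp (unpair.comp snd)) (const c))
        (Primrec.encode.comp (list_take.comp hk fst))))
      (Primrec.decode.comp snd).to₂)
      (pair (hk.comp fst) snd).to₂).to₂.to_comp
  exact Partrec.bind (Partrec.rfindOpt hstep)
    (hF.comp (Computable.snd.comp Computable.snd)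
      (list_drop.to_comp.comp (Computable.fst.comp Computable.snd) Computable.fst)).to₂

theorem mem_haltingPrefix (hc : IsCodeOf c V) {z s : BStr} {k : ℕ}
    (hks : (k, s) ∈ haltingPrefix c z) : s ∈ V (z.take k) := by
  obtain ⟨m, hm⟩ := Nat.rfindOpt_spec hks
  simp only [Option.mem_def, Option.map_eq_some_iff, Prod.mk.injEq] at hm
  obtain ⟨_, hs, rfl, rfl⟩ := hm
  exact (exists_evaln_bind_decode_iff hc).1 ⟨_, hs⟩

theorem haltingPrefix_dom (hc : IsCodeOf c V) {z s : BStr} {k : ℕ} (hs : s ∈ V (z.take k)) :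
    (haltingPrefix c z).Dom := by
  obtain ⟨t, ht⟩ := (exists_evaln_bind_decode_iff hc).2 hs
  exact Nat.rfindOpt_dom.2 ⟨Nat.pair k t, (k, s), by simp [ht]⟩

theorem mem_seqMachine_iff (hc : IsCodeOf c V) (hV : PrefixFreeDom V) {z x : BStr} :
    x ∈ seqMachine c F z ↔ ∃ q w s, z = q ++ w ∧ s ∈ V q ∧ x ∈ F s w := by
  constructor
  · intro hx
    obtain ⟨⟨k, s⟩, hks, hx⟩ := Part.mem_bind_iff.1 hx
    exact ⟨_, _, s, (List.take_append_drop k z).symm, mem_haltingPrefix hc hks, hx⟩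
  · rintro ⟨q, w, s, rfl, hs, hx⟩
    have hs₀ : s ∈ V ((q ++ w).take q.length) := by simpa using hs
    obtain ⟨⟨k, s'⟩, hks⟩ := Part.dom_iff_mem.1 (haltingPrefix_dom hc hs₀)
    have hs' := mem_haltingPrefix hc hks
    have hq : (q ++ w).take k = q := hV.eq_of_isPrefix (List.take_prefix _ _)
      (List.prefix_append _ _) (Part.dom_iff_mem.2 ⟨_, hs'⟩) (Part.dom_iff_mem.2 ⟨_, hs⟩)
    have hss : s' = s := Part.mem_unique (hq ▸ hs') hs
    have hw : (q ++ w).drop k = w := by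
      have h := List.take_append_drop k (q ++ w)
      rw [hq] at h
      exact List.append_cancel_left h
    exact Part.mem_bind_iff.2 ⟨(k, s'), hks, by rwa [hw, hss]⟩

theorem prefixFreeDom_seqMachine (hc : IsCodeOf c V) (hV : PrefixFreeDom V)
    (hF : ∀ s, PrefixFreeDom (F s)) : PrefixFreeDom (seqMachine c F) := by
  intro z z' hz hz' hpre
  obtain ⟨x, hx⟩ := Part.dom_iff_mem.1 hz
  obtain ⟨x', hx'⟩ := Part.dom_iff_mem.1 hz'
  obtain ⟨q, w, s, rfl, hs, hx⟩ := (mem_seqMachine_iff hc hV).1 hx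
  obtain ⟨q', w', s', rfl, hs', hx'⟩ := (mem_seqMachine_iff hc hV).1 hx'
  obtain rfl : q = q' := hV.eq_of_isPrefix ((List.prefix_append q w).trans hpre)
    (List.prefix_append _ _) (Part.dom_iff_mem.2 ⟨_, hs⟩) (Part.dom_iff_mem.2 ⟨_, hs'⟩)
  obtain rfl : s = s' := Part.mem_unique hs hs'
  rw [hF s w w' (Part.dom_iff_mem.2 ⟨_, hx⟩) (Part.dom_iff_mem.2 ⟨_, hx'⟩)
    ((List.prefix_append_right_inj q).1 hpre)]

theorem PrefixFreeDom.exists_partrec_seq (hV : Partrec V) (hVpf : PrefixFreeDom V)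
    (hF : Partrec₂ F) (hFpf : ∀ s, PrefixFreeDom (F s)) :
    ∃ M : BStr →. BStr, Partrec M ∧ PrefixFreeDom M ∧
      ∀ q w s x, s ∈ V q → x ∈ F s w → x ∈ M (q ++ w) := by
  obtain ⟨c, hc⟩ := hV.exists_isCodeOf
  exact ⟨seqMachine c F, partrec_seqMachine hF, prefixFreeDom_seqMachine hc hVpf hFpf,
    fun q w s x hs hx => (mem_seqMachine_iff hc hVpf).2 ⟨q, w, s, rfl, hs, hx⟩⟩

end Sequential

theorem exists_two_mul_cpx_le {U UK : BStr →. BStr} (hU : UniversalPlain U)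
    (hUK : UniversalPrefixFree UK) :
    ∃ c : ℕ, ∀ x : BStr, 2 * cpx UK x ≤ x.length + cpx U x + 2 * cpxN UK x.length + c := by
  obtain ⟨a, ha⟩ := hU.2 _ (Computable.id : Partrec fun p : BStr => Part.some p)
  have hF : Partrec₂ fun s : BStr => padMachine U (s.length + a) :=
    ((partrec₂_padMachine hU.1).comp
      (Primrec.nat_add.comp (Primrec.list_length.comp Primrec.fst) (Primrec.const a)).to_comp
      Computable.snd).to₂
  obtain ⟨M, hM, hMpf, hMmem⟩ :=
    PrefixFreeDom.exists_partrec_seq hUK.1 hUK.2.1 hF fun s => prefixFreeDom_padMachine U _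
  obtain ⟨b, hb⟩ := hUK.2.2 M hM hMpf
  refine ⟨a + 2 * b + 4, fun x => ?_⟩
  obtain ⟨q, hqK, hq⟩ := exists_length_eq_cpx (hUK.exists_numStr_mem x.length).choose_spec
  obtain ⟨p₀, hp₀, hxp₀⟩ := ha x x (Part.mem_some x)
  obtain ⟨p, hpC, hp⟩ := exists_length_eq_cpx hxp₀
  have hpa : p.length ≤ x.length + a := hpC ▸ (cpx_le_length hxp₀).trans hp₀
  obtain ⟨w, hw, hwlen⟩ := exists_padDecode_eq_some hpa
  have hx : x ∈ M (q ++ w) :=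
    hMmem q w _ x hq (mem_padMachine (by simpa [numStr] using hw) hp)
  have hK := cpx_le_length_add hb hx
  rw [List.length_append] at hK
  rw [cpxN, ← hqK]
  omega

theorem sum_measureReal_cyl_ofFn (μ : Measure Cantor) [IsProbabilityMeasure μ] (n : ℕ) :
    ∑ v : Fin n → Bool, μ.real (cyl (List.ofFn v)) = 1 := by
  set π : Cantor → Fin n → Bool := fun Z i => Z i
  have hπ : Measurable π := measurable_pi_lambda _ fun i => measurable_pi_apply _
  have hcyl : ∀ v, cyl (List.ofFn v) = π ⁻¹' {v} := by
    intro v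
    ext Z
    simp only [cyl, Set.mem_ofPred_eq, Set.mem_preimage, Set.mem_singleton_iff, funext_iff, π,
      List.get_ofFn]
    exact ⟨fun h i => h ⟨i, by simp⟩, fun h i => h (Fin.cast (by simp) i)⟩
  have := Measure.isProbabilityMeasure_map (μ := μ) hπ.aemeasurable
  simp_rw [hcyl, ← map_measureReal_apply hπ (measurableSet_singleton _)]
  rw [sum_measureReal_singleton, Finset.coe_univ, probReal_univ]

theorem mul_avgCpx_le {U V : BStr →. BStr} (μ : Measure Cantor) [IsProbabilityMeasure μ]
    {n : ℕ} {a b : ℝ} (h : ∀ x : BStr, x.length = n → a * cpx U x ≤ cpx V x + b) :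
    a * avgCpx U μ n ≤ avgCpx V μ n + b := by
  calc a * avgCpx U μ n
      = ∑ v : Fin n → Bool, a * cpx U (List.ofFn v) * μ.real (cyl (List.ofFn v)) := by
        rw [avgCpx, Finset.mul_sum]
        exact Finset.sum_congr rfl fun v _ => by rw [measureReal_def]; ring
    _ ≤ ∑ v : Fin n → Bool, (cpx V (List.ofFn v) + b) * μ.real (cyl (List.ofFn v)) :=
        Finset.sum_le_sum fun v _ =>
          mul_le_mul_of_nonneg_right (h _ List.length_ofFn) measureReal_nonneg
    _ = avgCpx V μ n + b := by
        simp only [add_mul, Finset.sum_add_distrib, ← Finset.mul_sum, sum_measureReal_cyl_ofFn,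
          mul_one]
        rfl

/-- there is a constant `c` such that for every probability
measure `μ` and every `n`:
`n - C(μ↾n) ≤ 2·(n + K(n) - K(μ↾n)) + c`. -/
theorem C_deficiency_le_K_deficiency
    (U UK : BStr →. BStr) (hU : UniversalPlain U) (hUK : UniversalPrefixFree UK) :
    ∃ c : ℝ, ∀ μ : Measure Cantor, IsProbabilityMeasure μ → ∀ n : ℕ,
      (n : ℝ) - avgCpx U μ n ≤
        2 * ((n : ℝ) + (cpxN UK n : ℝ) - avgCpx UK μ n) + c := by
  obtain ⟨c, hc⟩ := exists_two_mul_cpx_le hU hUK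
  refine ⟨c, fun μ _ n => ?_⟩
  have h : 2 * avgCpx UK μ n ≤ avgCpx U μ n + (n + 2 * cpxN UK n + c) :=
    mul_avgCpx_le μ fun x hx => by
      have := hc x
      rw [hx] at this
      exact_mod_cast (by omega : 2 * cpx UK x ≤ cpx U x + (n + 2 * cpxN UK n + c))
  linarith
end
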